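/- Let N ≥ 2 and let p be a prime with p² ∣ N. Then 2p is the least positive integer n such that the constant n-tuple (N/p mod N, …, N/p mod N) of elements of ℤ/Nℤ satisfies M_n(N/p, …, N/p) = Id or = −Id; that is, the constant 2p-tuple (N/p, …, N/p) is the (N/p)-monomial minimal solution of (E_N). -/

import Mathlib

open Matrix

/-- `Mmat [a₁, …, aₙ]` is the product `[[aₙ,-1],[1,0]] ⋯ [[a₁,-1],[1,0]]`. -/
def Mmat {R : Type*} [CommRing R] : List R → Matrix (Fin 2) (Fin 2) R
  | [] => 1
  | a :: t => Mmat t * !![a, -1; 1, 0]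

/-- A tuple is a solution of (E_N) if its matrix is `Id` or `-Id`. -/
def IsSolution {R : Type*} [CommRing R] (l : List R) : Prop :=
  Mmat l = 1 ∨ Mmat l = -1

/-- The sum `(a₁,…,aₙ) ⊕ (b₁,…,bₘ) = (a₁+bₘ, a₂,…,aₙ₋₁, aₙ+b₁, b₂,…,bₘ₋₁)`. -/
def oplus {R : Type*} [CommRing R] (a b : List R) : List R :=
  List.ofFn (fun i : Fin (a.length + b.length - 2) =>
    if (i : ℕ) = 0 then a.getD 0 0 + b.getD (b.length - 1) 0
    else if (i : ℕ) < a.length - 1 then a.getD (i : ℕ) 0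
    else if (i : ℕ) = a.length - 1 then a.getD (a.length - 1) 0 + b.getD 0 0
    else b.getD ((i : ℕ) - a.length + 1) 0)

/-- Two tuples are equivalent if one is a cyclic permutation of the other or of
its reversal. -/
def TupleEquiv {R : Type*} (a b : List R) : Prop :=
  (∃ k, b = a.rotate k) ∨ (∃ k, b = a.reverse.rotate k)

/-- A solution `c` (of size ≥ 3) is reducible if `c ∼ a ⊕ b` with `b` a solution,
`a` of size ≥ 3 and `b` of size ≥ 3. -/
def Reducible {R : Type*} [CommRing R] (c : List R) : Prop :=
  ∃ a b : List R, 3 ≤ a.length ∧ 3 ≤ b.length ∧ IsSolution b ∧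
    TupleEquiv c (oplus a b)

/-- The alternating tuple `(k, -k, k, -k, …)` of length `n`. -/
def altList {R : Type*} [CommRing R] (n : ℕ) (k : R) : List R :=
  List.ofFn (fun i : Fin n => if (i : ℕ) % 2 = 0 then k else -k)

/-- Continuants: `K₋₁ = 0`, `K₀ = 1`,
`Kₙ(x₁,…,xₙ) = x₁·Kₙ₋₁(x₂,…,xₙ) - Kₙ₋₂(x₃,…,xₙ)`. -/
def contK {R : Type*} [CommRing R] : List R → R
  | [] => 1
  | [x] => x
  | x :: y :: t => x * contK (y :: t) - contK t

/-!
If `a² = 0`, then `A = [[a, -1], [1, 0]]` satisfies `A² = -(1 + a J)` with `J = [[0, 1], [-1, 0]]`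
and `(a J)² = 0`, so `A^(2m) = (-1)^m (1 + m a J)`, while `A^(2m+1)` has lower-left entry
`(-1)^m`. Hence `M_n(a, …, a) = ±Id` exactly when `n = 2m` with `m a = 0`. For `a = N/p` in
`ℤ/Nℤ` with `p² ∣ N` we do have `a² = 0`, and `m · N/p ≡ 0 mod N` iff `p ∣ m`; so the solutions
are the sizes divisible by `2p`.
-/

section Nilpotent

variable {R : Type*} [CommRing R]

lemma Mmat_replicate (a : R) (n : ℕ) :
    Mmat (List.replicate n a) = !![a, -1; 1, 0] ^ n := by
  induction n with
  | zero => rfl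
  | succ n ih => rw [List.replicate_succ, Mmat, ih, pow_succ]

lemma pow_fin_two_of_mul_self_eq_zero {x : R} (hx : x * x = 0) (m : ℕ) :
    !![1, x; -x, 1] ^ m = !![1, m * x; -(m * x), 1] := by
  induction m with
  | zero => simp [Matrix.one_fin_two]
  | succ m ih =>
    rw [pow_succ, ih, Matrix.mul_fin_two]
    ext i j
    fin_cases i <;> fin_cases j <;> simp [mul_assoc, hx] <;> ring

variable {a : R}

lemma pow_two_mul_of_mul_self_eq_zero (ha : a * a = 0) (m : ℕ) :
    !![a, -1; 1, 0] ^ (2 * m) = (-1 : R) ^ m • !![1, m * a; -(m * a), 1] := by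
  have hsq : !![a, -1; 1, 0] ^ 2 = (-1 : R) • !![1, a; -a, 1] := by
    rw [sq, Matrix.mul_fin_two]
    ext i j
    fin_cases i <;> fin_cases j <;> simp [ha]
  rw [pow_mul, hsq, smul_pow, pow_fin_two_of_mul_self_eq_zero ha]

lemma pow_two_mul_add_one_apply_one_zero (ha : a * a = 0) (m : ℕ) :
    (!![a, -1; 1, 0] ^ (2 * m + 1)) 1 0 = (-1) ^ m := by
  rw [pow_succ, pow_two_mul_of_mul_self_eq_zero ha]
  simp [Matrix.mul_apply, Fin.sum_univ_two, mul_assoc, ha]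

theorem isSolution_replicate_iff [Nontrivial R] (ha : a * a = 0) (n : ℕ) :
    IsSolution (List.replicate n a) ↔ ∃ m, n = 2 * m ∧ (m : R) * a = 0 := by
  have off_diag : ∀ {M : Matrix (Fin 2) (Fin 2) R}, M = 1 ∨ M = -1 → M 0 1 = 0 ∧ M 1 0 = 0 := by
    rintro M (rfl | rfl) <;> simp
  unfold IsSolution
  rw [Mmat_replicate]
  constructor
  · intro hsol
    obtain ⟨m, rfl | rfl⟩ := Nat.even_or_odd' n
    · refine ⟨m, rfl, ?_⟩
      have h01 := (off_diag hsol).1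
      rw [pow_two_mul_of_mul_self_eq_zero ha] at h01
      simpa using h01
    · have h10 := (off_diag hsol).2
      rw [pow_two_mul_add_one_apply_one_zero ha] at h10
      exact absurd h10 (neg_one_pow_ne_zero m)
  · rintro ⟨m, rfl, hm⟩
    rw [pow_two_mul_of_mul_self_eq_zero ha, hm, neg_zero, ← Matrix.one_fin_two]
    rcases neg_one_pow_eq_or R m with h | h <;> simp [h]

end Nilpotent

lemma natCast_mul_div_eq_zero_iff {N p : ℕ} (hN : N ≠ 0) (hpN : p ∣ N) (m : ℕ) :
    (m : ZMod N) * ((N / p : ℕ) : ZMod N) = 0 ↔ p ∣ m := by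
  obtain ⟨q, rfl⟩ := hpN
  have hp : 0 < p := Nat.pos_of_ne_zero (left_ne_zero_of_mul hN)
  have hq : 0 < q := Nat.pos_of_ne_zero (right_ne_zero_of_mul hN)
  rw [Nat.mul_div_cancel_left q hp, ← Nat.cast_mul, ZMod.natCast_eq_zero_iff,
    Nat.mul_dvd_mul_iff_right hq]

theorem isSolution_replicate_div_iff {N p : ℕ} (hN : 2 ≤ N) (hdvd : p ^ 2 ∣ N) (n : ℕ) :
    IsSolution (List.replicate n ((N / p : ℕ) : ZMod N)) ↔ 2 * p ∣ n := by
  have : Fact (1 < N) := ⟨hN⟩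
  have hN0 : N ≠ 0 := by omega
  have hpN : p ∣ N := (dvd_pow_self p two_ne_zero).trans hdvd
  have hsq : ((N / p : ℕ) : ZMod N) * ((N / p : ℕ) : ZMod N) = 0 := by
    obtain ⟨k, rfl⟩ := hdvd
    have hp : p ≠ 0 := by rintro rfl; simp at hN0
    rw [← Nat.cast_mul, ZMod.natCast_eq_zero_iff, sq, mul_assoc, Nat.mul_div_cancel_left _ (by omega)]
    exact ⟨k, by ring⟩
  rw [isSolution_replicate_iff hsq]
  simp_rw [natCast_mul_div_eq_zero_iff hN0 hpN]
  constructor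
  · rintro ⟨m, rfl, k, rfl⟩
    exact ⟨k, by ring⟩
  · rintro ⟨k, rfl⟩
    exact ⟨p * k, by ring, dvd_mul_right p k⟩

theorem replicate_div_prime_sq_minimal_general (N p : ℕ) (hN : 2 ≤ N)
    (hdvd : p ^ 2 ∣ N) :
    IsLeast {n : ℕ | 0 < n ∧ IsSolution (List.replicate n ((N / p : ℕ) : ZMod N))} (2 * p) := by
  simp_rw [isSolution_replicate_div_iff hN hdvd]
  have hp : 0 < p := Nat.pos_of_ne_zero fun h => by simp [h] at hdvd; omega
  exact ⟨⟨by omega, dvd_rfl⟩, fun n ⟨hn, hdvd_n⟩ => Nat.le_of_dvd hn hdvd_n⟩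

theorem replicate_div_prime_sq_minimal (N p : ℕ) (hN : 2 ≤ N) (hp : p.Prime)
    (hdvd : p ^ 2 ∣ N) :
    IsLeast {n : ℕ | 0 < n ∧ IsSolution (List.replicate n ((N / p : ℕ) : ZMod N))} (2 * p) :=
  replicate_div_prime_sq_minimal_general N p hN hdvd
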